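/- For p > 0 and real x, y > 0, Σ_{m,n≥0} ((p)_{m+n} (-1)^n x^{m+n} / ((p)_m (p)_n)) · L_m^{(p-1)}(y) L_n^{(p-1)}(y) = ₀F₁(; p; -x²y²) = Γ(p) (xy)^{1-p} J_{p-1}(2xy), where the double series converges absolutely for |x| sufficiently small. -/

import Mathlib

/-- Pochhammer symbol `(a)_n`. -/
noncomputable def poch (a : ℝ) (n : ℕ) : ℝ := Polynomial.eval a (ascPochhammer ℝ n)

/-- Generalized Laguerre polynomial. -/
noncomputable def laguerre (a : ℝ) (n : ℕ) (x : ℝ) : ℝ :=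
  ∑ k ∈ Finset.range (n + 1),
    (-1) ^ k * poch (a + k + 1) (n - k) / ((n - k).factorial * k.factorial) * x ^ k

/-- `₀F₁(; b; z)`. -/
noncomputable def F01 (b z : ℝ) : ℝ := ∑' n : ℕ, z ^ n / (poch b n * n.factorial)

/-- Bessel function of the first kind, `J_ν(w) = Σ_k (-1)^k (w/2)^{ν+2k}/(k! Γ(ν+k+1))`. -/
noncomputable def besselJ (ν w : ℝ) : ℝ :=
  ∑' k : ℕ, (-1) ^ k * (w / 2) ^ (ν + 2 * k : ℝ) / (k.factorial * Real.Gamma (ν + k + 1))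

/-- Term of the double series in Exton's corrected result (4.3). -/
noncomputable def exton43Term (p x y : ℝ) (mn : ℕ × ℕ) : ℝ :=
  poch p (mn.1 + mn.2) * (-1) ^ mn.2 * x ^ (mn.1 + mn.2) / (poch p mn.1 * poch p mn.2) *
    laguerre (p - 1) mn.1 y * laguerre (p - 1) mn.2 y

/-!
`L_n^{(p-1)}(y) / (p)_n` is the `n`-th coefficient of `₀F₁(; p; -y t) eᵗ`, and
`(-1)ⁿ L_n^{(p-1)}(y) / (p)_n` that of `₀F₁(; p; y t) e⁻ᵗ`. Since the exponentials cancel, the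
antidiagonal `m + n = s` of the double series sums to `(p)_s xˢ` times the `s`-th coefficient of
`₀F₁(; p; -y t) ₀F₁(; p; y t)`. This product is even in `t`, and its coefficient of `t^{2k}` is
`(-1)ᵏ y^{2k} / (k! (p)_k (p)_{2k})`: the sum satisfies a first-order recurrence in `k`, found and
certified by Zeilberger's algorithm. Summing by antidiagonals gives `₀F₁(; p; -x²y²)`, and the
Bessel form follows termwise from `Γ(p + k) = (p)_k Γ(p)`.
-/

open Finset.HasAntidiagonal in
theorem Summable.tsum_eq_tsum_sum_antidiagonal {A α : Type*} [AddCommMonoid A]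
    [Finset.HasAntidiagonal A] [AddCommMonoid α] [TopologicalSpace α] [ContinuousAdd α]
    [T3Space α] {f : A × A → α} (hf : Summable f) :
    ∑' x, f x = ∑' n, ∑ kl ∈ antidiagonal n, f kl := by
  rw [← sigmaAntidiagonalEquivProd.tsum_eq f]
  exact ((sigmaAntidiagonalEquivProd.summable_iff.mpr hf).tsum_sigma'
    fun n ↦ (hasSum_fintype _).summable).trans
      (tsum_congr fun n ↦ Finset.tsum_subtype (antidiagonal n) f)

theorem tsum_eq_tsum_even_of_odd_eq_zero {α : Type*} [AddCommMonoid α] [TopologicalSpace α]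
    {f : ℕ → α} (hf : ∀ t, f (2 * t + 1) = 0) : ∑' n, f n = ∑' t, f (2 * t) := by
  refine ((mul_right_injective₀ two_ne_zero).tsum_eq fun n hn ↦ ?_).symm
  obtain ⟨t, rfl | rfl⟩ := Nat.even_or_odd' n
  · exact ⟨t, rfl⟩
  · exact absurd (hf t) hn

lemma poch_succ (a : ℝ) (n : ℕ) : poch a (n + 1) = poch a n * (a + n) :=
  ascPochhammer_succ_eval n a

lemma poch_pos {a : ℝ} (ha : 0 < a) (n : ℕ) : 0 < poch a n :=
  ascPochhammer_pos n a ha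

lemma poch_add (a : ℝ) (m n : ℕ) : poch a (m + n) = poch a m * poch (a + m) n := by
  simpa [poch, Polynomial.eval_comp] using
    (congrArg (Polynomial.eval a) (ascPochhammer_mul ℝ m n)).symm

noncomputable def f01Coeff (b : ℝ) (n : ℕ) : ℝ := ((n.factorial : ℝ) * poch b n)⁻¹

lemma f01Coeff_pos {b : ℝ} (hb : 0 < b) (n : ℕ) : 0 < f01Coeff b n := by
  have := poch_pos hb n
  unfold f01Coeff
  positivity

lemma f01Coeff_zero (b : ℝ) : f01Coeff b 0 = 1 := by simp [f01Coeff, poch]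

lemma f01Coeff_succ (b : ℝ) (n : ℕ) :
    f01Coeff b (n + 1) = f01Coeff b n * (((n : ℝ) + 1) * (b + n))⁻¹ := by
  rw [f01Coeff, f01Coeff, ← mul_inv, Nat.factorial_succ, poch_succ]
  push_cast
  ring

noncomputable def f01Series (b : ℝ) : PowerSeries ℝ := PowerSeries.mk (f01Coeff b)

section LaguerreSeries

open PowerSeries

lemma laguerre_eq_poch_mul_coeff {p : ℝ} (hp : 0 < p) (y : ℝ) (n : ℕ) :
    laguerre (p - 1) n y = poch p n * coeff n (rescale (-y) (f01Series p) * exp ℝ) := by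
  rw [coeff_mul, Finset.Nat.sum_antidiagonal_eq_sum_range_succ_mk, laguerre, Finset.mul_sum]
  refine Finset.sum_congr rfl fun k hk ↦ ?_
  have hkn : k ≤ n := Nat.lt_succ_iff.mp (Finset.mem_range.mp hk)
  have hpoch : poch p n = poch p k * poch (p + k) (n - k) := by
    rw [← poch_add, Nat.add_sub_cancel' hkn]
  have := poch_pos hp k
  rw [show p - 1 + k + 1 = p + k by ring, hpoch]
  simp only [coeff_rescale, f01Series, coeff_mk, coeff_exp, f01Coeff]
  rw [map_div₀, map_one, map_natCast, neg_pow y]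
  field_simp

lemma neg_one_pow_mul_laguerre_eq_poch_mul_coeff {p : ℝ} (hp : 0 < p) (y : ℝ) (n : ℕ) :
    (-1) ^ n * laguerre (p - 1) n y =
      poch p n * coeff n (rescale y (f01Series p) * evalNegHom (exp ℝ)) := by
  have hneg : rescale y (f01Series p) * evalNegHom (exp ℝ) =
      evalNegHom (rescale (-y) (f01Series p) * exp ℝ) := by
    rw [map_mul, evalNegHom, rescale_rescale, neg_mul_neg, mul_one]
  rw [hneg, evalNegHom, coeff_rescale, laguerre_eq_poch_mul_coeff hp]
  ring

noncomputable def f01CrossCoeff (p : ℝ) (s : ℕ) : ℝ :=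
  coeff s (evalNegHom (f01Series p) * f01Series p)

lemma f01CrossCoeff_eq_sum (p : ℝ) (s : ℕ) :
    f01CrossCoeff p s =
      ∑ j ∈ Finset.range (s + 1), (-1) ^ j * f01Coeff p j * f01Coeff p (s - j) := by
  rw [f01CrossCoeff, coeff_mul, Finset.Nat.sum_antidiagonal_eq_sum_range_succ_mk]
  simp only [evalNegHom, coeff_rescale, f01Series, coeff_mk, mul_assoc]

lemma f01CrossCoeff_odd (p : ℝ) (t : ℕ) : f01CrossCoeff p (2 * t + 1) = 0 := by
  have hinv : evalNegHom (evalNegHom (f01Series p) * f01Series p) =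
      evalNegHom (f01Series p) * f01Series p := by
    rw [map_mul, mul_comm, evalNegHom, rescale_rescale, neg_mul_neg, mul_one, rescale_one,
      RingHom.id_apply]
  have h := congrArg (coeff (2 * t + 1)) hinv
  rw [evalNegHom, coeff_rescale, Odd.neg_one_pow ⟨t, rfl⟩] at h
  rw [f01CrossCoeff, evalNegHom]
  linarith

open Finset.HasAntidiagonal in
lemma sum_antidiagonal_exton43Term {p : ℝ} (hp : 0 < p) (x y : ℝ) (s : ℕ) :
    ∑ mn ∈ antidiagonal s, exton43Term p x y mn = poch p s * (x * y) ^ s * f01CrossCoeff p s := by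
  set U := rescale (-y) (f01Series p) * exp ℝ
  set V := rescale y (f01Series p) * evalNegHom (exp ℝ)
  have hUV : U * V = rescale y (evalNegHom (f01Series p) * f01Series p) := by
    calc U * V = rescale (-y) (f01Series p) * rescale y (f01Series p) *
          (exp ℝ * evalNegHom (exp ℝ)) := by ring
      _ = _ := by
        rw [exp_mul_exp_neg_eq_one, mul_one, map_mul, evalNegHom, rescale_rescale, neg_one_mul]
  have hterm : ∀ mn ∈ antidiagonal s,
      exton43Term p x y mn = poch p s * x ^ s * (coeff mn.1 U * coeff mn.2 V) := by
    rintro ⟨m, n⟩ hmn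
    rw [mem_antidiagonal] at hmn
    have := poch_pos hp m
    have := poch_pos hp n
    calc exton43Term p x y (m, n)
        = poch p s * x ^ s / (poch p m * poch p n) * laguerre (p - 1) m y *
            ((-1) ^ n * laguerre (p - 1) n y) := by rw [exton43Term, ← hmn]; ring
      _ = _ := by
        rw [laguerre_eq_poch_mul_coeff hp, neg_one_pow_mul_laguerre_eq_poch_mul_coeff hp]
        field_simp
        rfl
  rw [Finset.sum_congr rfl hterm, ← Finset.mul_sum, ← coeff_mul, hUV, coeff_rescale, mul_pow,
    f01CrossCoeff]
  ring

end LaguerreSeries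

-- Extended by zero beyond `j = 2 * t`, where the truncated `2 * t - j` would give junk terms.
noncomputable def crossSummand (p : ℝ) (t j : ℕ) : ℝ :=
  if j ≤ 2 * t then (-1) ^ j * f01Coeff p j * f01Coeff p (2 * t - j) else 0

-- Zeilberger's certificate for the recurrence in `t` of `∑ j, crossSummand p t j`.
noncomputable def crossCertificate (p : ℝ) (t j : ℕ) : ℝ :=
  crossSummand p (t + 1) j * (-((j : ℝ) * (p + j - 1)) / 2 *
    ((j : ℝ) ^ 2 - (6 * t + 2 * p + 3) * j +
      (10 * (t : ℝ) ^ 2 + (7 * p + 10) * t + p ^ 2 + 4 * p + 2)))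

lemma crossSummand_telescope_of_le {p : ℝ} (hp : 0 < p) {t j : ℕ} (hj : j ≤ 2 * t) :
    ((t : ℝ) + 1) * (p + t) * (p + 2 * t) * (p + 2 * t + 1) * crossSummand p (t + 1) j +
      crossSummand p t j = crossCertificate p t (j + 1) - crossCertificate p t j := by
  obtain ⟨k, hk⟩ := Nat.exists_eq_add_of_le hj
  have e0 : 2 * t - j = k := by omega
  have e1 : 2 * (t + 1) - (j + 1) = k + 1 := by omega
  have e2 : 2 * (t + 1) - j = k + 1 + 1 := by omega
  have ht : (t : ℝ) = (j + k) / 2 := by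
    have : (2 * t : ℝ) = j + k := by exact_mod_cast hk
    linarith
  simp only [crossCertificate, crossSummand, if_pos hj, if_pos (by omega : j ≤ 2 * (t + 1)),
    if_pos (by omega : j + 1 ≤ 2 * (t + 1)), e0, e1, e2, f01Coeff_succ, ht]
  have := f01Coeff_pos hp j
  have := f01Coeff_pos hp k
  have : (0 : ℝ) ≤ j := j.cast_nonneg
  have : (0 : ℝ) ≤ k := k.cast_nonneg
  push_cast
  field_simp
  ring

lemma crossSummand_telescope {p : ℝ} (hp : 0 < p) (t j : ℕ) :
    ((t : ℝ) + 1) * (p + t) * (p + 2 * t) * (p + 2 * t + 1) * crossSummand p (t + 1) j +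
      crossSummand p t j = crossCertificate p t (j + 1) - crossCertificate p t j := by
  rcases le_or_gt j (2 * t) with hj | hj
  · exact crossSummand_telescope_of_le hp hj
  obtain rfl | rfl | hj := show j = 2 * t + 1 ∨ j = 2 * t + 2 ∨ 2 * t + 2 < j by omega
  · have e1 : 2 * (t + 1) - (2 * t + 1) = 0 + 1 := by omega
    have e2 : 2 * (t + 1) - (2 * t + 1 + 1) = 0 := by omega
    simp only [crossCertificate, crossSummand, if_neg (by omega : ¬2 * t + 1 ≤ 2 * t),
      if_pos (by omega : 2 * t + 1 ≤ 2 * (t + 1)),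
      if_pos (by omega : 2 * t + 1 + 1 ≤ 2 * (t + 1)), e1, e2,
      f01Coeff_succ p 0, f01Coeff_succ p (2 * t + 1), f01Coeff_zero]
    have := f01Coeff_pos hp (2 * t + 1)
    push_cast
    field_simp
    ring
  · simp only [crossCertificate, crossSummand, if_neg (by omega : ¬2 * t + 2 ≤ 2 * t),
      if_pos (by omega : 2 * t + 2 ≤ 2 * (t + 1)),
      if_neg (by omega : ¬2 * t + 2 + 1 ≤ 2 * (t + 1)),
      show 2 * (t + 1) - (2 * t + 2) = 0 by omega, f01Coeff_zero]
    push_cast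
    ring
  · simp only [crossCertificate, crossSummand, if_neg (by omega : ¬j ≤ 2 * t),
      if_neg (by omega : ¬j ≤ 2 * (t + 1)), if_neg (by omega : ¬j + 1 ≤ 2 * (t + 1))]
    ring

lemma f01CrossCoeff_two_mul_eq_sum (p : ℝ) {t n : ℕ} (hn : 2 * t + 1 ≤ n) :
    f01CrossCoeff p (2 * t) = ∑ j ∈ Finset.range n, crossSummand p t j := by
  rw [f01CrossCoeff_eq_sum, ← Finset.sum_subset (Finset.range_subset_range.mpr hn)]
  · refine Finset.sum_congr rfl fun j hj ↦ ?_
    rw [crossSummand, if_pos (Nat.lt_succ_iff.mp (Finset.mem_range.mp hj))]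
  · intro j _ hj
    rw [crossSummand, if_neg (by simpa using hj)]

lemma f01CrossCoeff_two_mul_add_two {p : ℝ} (hp : 0 < p) (t : ℕ) :
    ((t : ℝ) + 1) * (p + t) * (p + 2 * t) * (p + 2 * t + 1) * f01CrossCoeff p (2 * (t + 1)) +
      f01CrossCoeff p (2 * t) = 0 := by
  rw [f01CrossCoeff_two_mul_eq_sum p (n := 2 * t + 3) (by omega),
    f01CrossCoeff_two_mul_eq_sum p (n := 2 * t + 3) (by omega), Finset.mul_sum,
    ← Finset.sum_add_distrib, Finset.sum_congr rfl fun j _ ↦ crossSummand_telescope hp t j,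
    Finset.sum_range_sub (crossCertificate p t)]
  simp [crossCertificate, crossSummand, show ¬2 * t + 3 ≤ 2 * (t + 1) by omega]

lemma f01CrossCoeff_two_mul {p : ℝ} (hp : 0 < p) (t : ℕ) :
    f01CrossCoeff p (2 * t) = (-1) ^ t * f01Coeff p t / poch p (2 * t) := by
  induction t with
  | zero => simp [f01CrossCoeff_eq_sum, f01Coeff_zero, poch]
  | succ t ih =>
    have hrec := f01CrossCoeff_two_mul_add_two hp t
    rw [ih] at hrec
    have hpoch : poch p (2 * (t + 1)) = poch p (2 * t) * (p + 2 * t) * (p + 2 * t + 1) := by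
      rw [show 2 * (t + 1) = 2 * t + 1 + 1 by ring, poch_succ, poch_succ]
      push_cast
      ring
    have := poch_pos hp (2 * t)
    have : (0 : ℝ) ≤ t := t.cast_nonneg
    rw [hpoch, f01Coeff_succ]
    field_simp at hrec ⊢
    linear_combination hrec

theorem tsum_exton43Term {p x y : ℝ} (hp : 0 < p) (hsum : Summable (exton43Term p x y)) :
    ∑' mn : ℕ × ℕ, exton43Term p x y mn = F01 p (-(x ^ 2 * y ^ 2)) := by
  rw [hsum.tsum_eq_tsum_sum_antidiagonal, tsum_congr (sum_antidiagonal_exton43Term hp x y),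
    tsum_eq_tsum_even_of_odd_eq_zero fun t ↦ by rw [f01CrossCoeff_odd, mul_zero], F01]
  refine tsum_congr fun t ↦ ?_
  have := poch_pos hp (2 * t)
  rw [f01CrossCoeff_two_mul hp, f01Coeff, pow_mul, neg_pow (x ^ 2 * y ^ 2), mul_pow, ← mul_pow]
  field_simp

lemma Real.Gamma_add_nat_eq_poch_mul {a : ℝ} (ha : 0 < a) (n : ℕ) :
    Real.Gamma (a + n) = poch a n * Real.Gamma a := by
  induction n with
  | zero => simp [poch]
  | succ n ih =>
    rw [Nat.cast_succ, ← add_assoc, Real.Gamma_add_one (by positivity), ih, poch_succ]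
    ring

theorem F01_neg_sq_eq_Gamma_mul_besselJ {p w : ℝ} (hp : 0 < p) (hw : 0 < w) :
    F01 p (-w ^ 2) = Real.Gamma p * w ^ (1 - p) * besselJ (p - 1) (2 * w) := by
  rw [besselJ, F01, ← tsum_mul_left]
  refine tsum_congr fun n ↦ ?_
  have hpow : w ^ (1 - p) * w ^ (p - 1 + 2 * (n : ℝ)) = (w ^ 2) ^ n := by
    rw [← Real.rpow_add hw, ← pow_mul, ← Real.rpow_natCast]
    push_cast
    ring_nf
  have := poch_pos hp n
  rw [mul_div_cancel_left₀ w two_ne_zero, show p - 1 + n + 1 = p + n by ring,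
    Real.Gamma_add_nat_eq_poch_mul hp, neg_pow, ← hpow]
  have := Real.Gamma_pos_of_pos hp
  field_simp

theorem exton_4_3_corrected (p x y : ℝ) (hp : 0 < p) (hx : 0 < x) (hy : 0 < y)
    (hsum : Summable (exton43Term p x y)) :
    (∑' mn : ℕ × ℕ, exton43Term p x y mn) = F01 p (-(x ^ 2 * y ^ 2)) ∧
      F01 p (-(x ^ 2 * y ^ 2)) =
        Real.Gamma p * (x * y) ^ ((1 : ℝ) - p) * besselJ (p - 1) (2 * x * y) := by
  refine ⟨tsum_exton43Term hp hsum, ?_⟩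
  rw [← mul_pow, mul_assoc 2]
  exact F01_neg_sq_eq_Gamma_mul_besselJ hp (mul_pos hx hy)
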